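/- arXiv:2109.11344 — 2 statements merged into one kernel-verified Lean document; each statement's English description precedes it below -/
import Mathlib

section
/- Let F₀ be strictly monotone on a convex set K ⊆ ℝⁿ, and let x₀ solve VI(F₀,K) and x₁ solve VI(F₁,K) with x₀ ≠ x₁. Then ⟨F₁(x₁) − F₀(x₁), x₁ − x₀⟩ < 0 and ⟨F₁(x₁) − F₀(x₀), x₁ − x₀⟩ ≤ 0. -/
open RealInnerProductSpace

/-- for strictly monotone F₀ and distinct solutions x₀ of VI(F₀,K),
x₁ of VI(F₁,K): ⟨F₁(x₁) − F₀(x₁), x₁ − x₀⟩ < 0 and ⟨F₁(x₁) − F₀(x₀), x₁ − x₀⟩ ≤ 0. -/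
theorem vi_treatment_effect_strictly_monotone
    {n : ℕ} (K : Set (EuclideanSpace ℝ (Fin n))) (hKconv : Convex ℝ K)
    (F₀ F₁ : EuclideanSpace ℝ (Fin n) → EuclideanSpace ℝ (Fin n))
    (hmono : ∀ x ∈ K, ∀ y ∈ K, x ≠ y → 0 < ⟪F₀ x - F₀ y, x - y⟫)
    (x₀ : EuclideanSpace ℝ (Fin n)) (hx₀ : x₀ ∈ K)
    (hsol₀ : ∀ y ∈ K, 0 ≤ ⟪F₀ x₀, y - x₀⟫)
    (x₁ : EuclideanSpace ℝ (Fin n)) (hx₁ : x₁ ∈ K)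
    (hsol₁ : ∀ y ∈ K, 0 ≤ ⟪F₁ x₁, y - x₁⟫)
    (hne : x₀ ≠ x₁) :
    ⟪F₁ x₁ - F₀ x₁, x₁ - x₀⟫ < 0 ∧ ⟪F₁ x₁ - F₀ x₀, x₁ - x₀⟫ ≤ 0 := by
  have h1 : 0 ≤ ⟪F₁ x₁, x₀ - x₁⟫ := hsol₁ x₀ hx₀
  have h2 : 0 ≤ ⟪F₀ x₀, x₁ - x₀⟫ := hsol₀ x₁ hx₁
  have h3 : 0 < ⟪F₀ x₁ - F₀ x₀, x₁ - x₀⟫ := hmono x₁ hx₁ x₀ hx₀ hne.symm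
  have e1 : ⟪F₁ x₁, x₀ - x₁⟫ = -⟪F₁ x₁, x₁ - x₀⟫ := by
    rw [← inner_neg_right]; congr 1; abel
  simp only [inner_sub_left] at h3 ⊢
  constructor <;> linarith [e1 ▸ h1]
end

section
/- (Supermartingale convergence, deterministic Robbins–Siegmund special case) Let (y_k), (u_k), (a_k), (b_k) be sequences of nonnegative reals with y_{k+1} ≤ (1 + a_k) y_k − u_k + b_k for all k ≥ 0, where Σ a_k < ∞ and Σ b_k < ∞. Then (y_k) converges to a finite nonnegative limit and Σ u_k < ∞. -/
open Filter

/-- deterministic Robbins–Siegmund (supermartingale convergence)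
lemma: if y_{k+1} ≤ (1 + a_k)y_k − u_k + b_k with nonnegative sequences and
Σa_k < ∞, Σb_k < ∞, then y_k converges and Σu_k < ∞. -/
theorem robbins_siegmund_deterministic
    (y u a b : ℕ → ℝ)
    (hy : ∀ k, 0 ≤ y k) (hu : ∀ k, 0 ≤ u k) (ha : ∀ k, 0 ≤ a k) (hb : ∀ k, 0 ≤ b k)
    (hrec : ∀ k, y (k + 1) ≤ (1 + a k) * y k - u k + b k)
    (hasum : Summable a) (hbsum : Summable b) :
    (∃ l : ℝ, 0 ≤ l ∧ Tendsto y atTop (nhds l)) ∧ Summable u := by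
  have hstep : ∀ k, y (k+1) ≤ y k + a k * y k + b k := by
    intro k
    have h := hrec k
    nlinarith [hu k]
  -- tail sums of b
  set Tb : ℕ → ℝ := fun k => ∑' j, b (j + k) with hTbdef
  have hTbsum : ∀ k, Summable (fun j => b (j + k)) := fun k =>
    (summable_nat_add_iff k).2 hbsum
  have hTbnn : ∀ k, 0 ≤ Tb k := fun k => tsum_nonneg (fun j => hb _)
  have hTbrec : ∀ k, Tb k = b k + Tb (k+1) := by
    intro k
    have h := Summable.tsum_eq_zero_add (hTbsum k)
    simp only [hTbdef]
    rw [h]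
    congr 1
    · simp
    · apply tsum_congr; intro j; congr 1; omega
  -- uniform bound M on y
  set Sa := ∑' k, a k with hSadef
  set M : ℝ := Real.exp Sa * (y 0 + Tb 0) with hMdef
  have hP : ∀ n, ∏ j ∈ Finset.range n, (1 + a j) ≤ Real.exp Sa := by
    intro n
    calc ∏ j ∈ Finset.range n, (1 + a j)
        ≤ ∏ j ∈ Finset.range n, Real.exp (a j) := by
          apply Finset.prod_le_prod
          · intro j _; linarith [ha j]
          · intro j _; linarith [Real.add_one_le_exp (a j)]
      _ = Real.exp (∑ j ∈ Finset.range n, a j) := (Real.exp_sum _ _).symm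
      _ ≤ Real.exp Sa := Real.exp_le_exp.2 (Summable.sum_le_tsum _ (fun i _ => ha i) hasum)
  have hybd : ∀ n, y n ≤ M := by
    have key : ∀ n, y n + Tb n ≤ (∏ j ∈ Finset.range n, (1 + a j)) * (y 0 + Tb 0) := by
      intro n
      induction n with
      | zero => simp
      | succ n ih =>
        have h1 : y (n+1) + Tb (n+1) ≤ (1 + a n) * (y n + Tb n) := by
          have h2 := hstep n
          have h3 := hTbrec n
          nlinarith [mul_nonneg (ha n) (hTbnn n), hy n]
        calc y (n+1) + Tb (n+1) ≤ (1 + a n) * (y n + Tb n) := h1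
          _ ≤ (1 + a n) * ((∏ j ∈ Finset.range n, (1 + a j)) * (y 0 + Tb 0)) := by
              apply mul_le_mul_of_nonneg_left ih; linarith [ha n]
          _ = (∏ j ∈ Finset.range (n+1), (1 + a j)) * (y 0 + Tb 0) := by
              rw [Finset.prod_range_succ]; ring
    intro n
    have h1 := key n
    have h2 : (∏ j ∈ Finset.range n, (1 + a j)) * (y 0 + Tb 0) ≤ M := by
      rw [hMdef]
      apply mul_le_mul_of_nonneg_right (hP n); linarith [hy 0, hTbnn 0]
    linarith [hTbnn n]
  have hMnn : 0 ≤ M := le_trans (hy 0) (hybd 0)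
  -- summability of u
  have husum : Summable u := by
    apply summable_of_sum_range_le (c := y 0 + M * Sa + ∑' k, b k) hu
    intro n
    have h1 : ∀ k, u k ≤ (y k - y (k+1)) + a k * M + b k := by
      intro k
      have h := hrec k
      have h' := hybd k
      nlinarith [ha k, hy k]
    have hsanb : ∑ k ∈ Finset.range n, a k ≤ Sa := Summable.sum_le_tsum _ (fun i _ => ha i) hasum
    have hsbnb : ∑ k ∈ Finset.range n, b k ≤ ∑' k, b k := Summable.sum_le_tsum _ (fun i _ => hb i) hbsum
    calc ∑ k ∈ Finset.range n, u k
        ≤ ∑ k ∈ Finset.range n, ((y k - y (k+1)) + a k * M + b k) :=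
          Finset.sum_le_sum (fun k _ => h1 k)
      _ = (y 0 - y n) + (∑ k ∈ Finset.range n, a k) * M + ∑ k ∈ Finset.range n, b k := by
          rw [Finset.sum_add_distrib, Finset.sum_add_distrib, Finset.sum_range_sub' y n,
            ← Finset.sum_mul]
      _ ≤ y 0 + M * Sa + ∑' k, b k := by
          nlinarith [hy n, hMnn]
  refine ⟨?_, husum⟩
  -- convergence of y
  set c : ℕ → ℝ := fun k => a k * M + b k with hcdef
  have hcsum : Summable c := (hasum.mul_right M).add hbsum
  have hcnn : ∀ k, 0 ≤ c k := fun k => by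
    have := ha k; have := hb k; positivity
  set Tc : ℕ → ℝ := fun k => ∑' j, c (j + k) with hTcdef
  have hTcsum : ∀ k, Summable (fun j => c (j + k)) := fun k =>
    (summable_nat_add_iff k).2 hcsum
  have hTcnn : ∀ k, 0 ≤ Tc k := fun k => tsum_nonneg (fun j => hcnn _)
  have hTcrec : ∀ k, Tc k = c k + Tc (k+1) := by
    intro k
    have h := Summable.tsum_eq_zero_add (hTcsum k)
    simp only [hTcdef]
    rw [h]
    congr 1
    · simp
    · apply tsum_congr; intro j; congr 1; omega
  set v : ℕ → ℝ := fun k => y k + Tc k with hvdef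
  have hvanti : Antitone v := by
    apply antitone_nat_of_succ_le
    intro k
    have h1 := hstep k
    have h2 := hTcrec k
    have h3 : a k * y k ≤ a k * M := mul_le_mul_of_nonneg_left (hybd k) (ha k)
    simp only [hvdef, hcdef] at *
    nlinarith
  have hvbdd : BddBelow (Set.range v) := by
    refine ⟨0, ?_⟩
    rintro x ⟨k, rfl⟩
    exact add_nonneg (hy k) (hTcnn k)
  have hvlim : Tendsto v atTop (nhds (⨅ k, v k)) := tendsto_atTop_ciInf hvanti hvbdd
  have hTclim : Tendsto Tc atTop (nhds 0) := by
    simpa [hTcdef] using tendsto_sum_nat_add c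
  have hylim : Tendsto y atTop (nhds (⨅ k, v k)) := by
    have h := hvlim.sub hTclim
    simp only [hvdef, add_sub_cancel_right, sub_zero] at h
    exact h
  exact ⟨⨅ k, v k, ge_of_tendsto' hylim (fun k => hy k), hylim⟩
end
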